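/- arXiv:1907.02753 — 7 statements merged into one kernel-verified Lean document; each statement's English description precedes it below -/
import Mathlib

section
/- Let 𝒜 be a complex unital Banach algebra, A, B, C ∈ 𝒜, z₀ ∈ ℂ and ρ > 0. Assume σ(A) is contained in the open ball B(z₀, ρ) and σ(−B) is disjoint from the closed ball of center z₀ and radius ρ (so that for every z with |z − z₀| = ρ both z·1 − A and z·1 + B are invertible). Then the element X := −(2πi)^{-1} ∮_{|z−z₀|=ρ} (z·1 − A)^{-1} · C · (z·1 + B)^{-1} dz (a circle integral of an 𝒜-valued continuous function) satisfies A·X + X·B + C = 0. -/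
/-!
Writing `R_a(z) = (z·1 - a)⁻¹` for the resolvent, the integrand telescopes against the Sylvester
operator: `A R_A(z) C R_{-B}(z) + R_A(z) C R_{-B}(z) B = R_A(z) C - C R_{-B}(z)`, because
`A R_A(z) = z R_A(z) - 1` and `R_{-B}(z) B = 1 - z R_{-B}(z)`. Hence, for `W` the contour
integral, `A W + W B = (∮ R_A) C - C ∮ R_{-B}`. The resolvent of `-B` is holomorphic on the closed
disc, so its integral vanishes by Cauchy's theorem. The resolvent of `A` is holomorphic outside the
disc, so its integral does not change as the circle grows, and `(z - z₀) R_A(z) → 1` at infinity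
makes it `2πi·1`.
-/

open Real Metric Complex Filter Set Topology Bornology

theorem ContinuousLinearMap.circleIntegral_comp_comm {E F : Type*} [NormedAddCommGroup E]
    [NormedSpace ℂ E] [CompleteSpace E] [NormedAddCommGroup F] [NormedSpace ℂ F]
    [CompleteSpace F] (L : E →L[ℂ] F) {f : ℂ → E} {c : ℂ} {R : ℝ}
    (hf : CircleIntegrable f c R) :
    (∮ z in C(c, R), L (f z)) = L (∮ z in C(c, R), f z) := by
  simp only [circleIntegral, ← L.intervalIntegral_comp_comm hf.out, L.map_smul]

section CauchyAtInfinity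

variable {E : Type*} [NormedAddCommGroup E] [NormedSpace ℂ E] [CompleteSpace E]

theorem circleIntegral_eq_of_differentiable_off_ball_of_tendsto {c : ℂ} {r : ℝ} (hr : 0 < r)
    {f : ℂ → E} {y : E} (hd : ∀ z ∉ ball c r, DifferentiableAt ℂ f z)
    (hy : Tendsto (fun z ↦ (z - c) • f z) (cobounded ℂ) (𝓝 y)) :
    (∮ z in C(c, r), f z) = (2 * π * I : ℂ) • y := by
  rw [← sub_eq_zero, ← norm_le_zero_iff]
  refine le_of_forall_gt_imp_ge_of_dense fun ε ε0 ↦ ?_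
  obtain ⟨R₁, -, hR₁⟩ := (hasBasis_cobounded_compl_closedBall c).tendsto_left_iff.1
    (tendsto_iff_norm_sub_tendsto_zero.1 hy) _ (Iio_mem_nhds (div_pos ε0 Real.two_pi_pos))
  set R := max r (R₁ + 1)
  have hrR : r ≤ R := le_max_left _ _
  have hR : 0 < R := hr.trans_le hrR
  have hout : ∀ z ∈ sphere c R, z ∉ ball c r := fun z hz ↦ by
    rw [mem_sphere] at hz; simp [hz, hrR]
  have hfR : CircleIntegrable f c R :=
    (continuousOn_of_forall_continuousAt fun z hz ↦
      (hd z (hout z hz)).continuousAt).circleIntegrable hR.le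
  have hne : ∀ z ∈ sphere c R, z - c ≠ 0 := fun z hz ↦
    sub_ne_zero.2 (ne_of_mem_sphere hz hR.ne')
  have hinv : CircleIntegrable (fun z ↦ (z - c)⁻¹ • y) c R :=
    (((continuousOn_id.sub continuousOn_const).inv₀ hne).smul
      continuousOn_const).circleIntegrable hR.le
  calc ‖(∮ z in C(c, r), f z) - (2 * π * I : ℂ) • y‖
      = ‖∮ z in C(c, R), (f z - (z - c)⁻¹ • y)‖ := by
        rw [circleIntegral.integral_sub hfR hinv, circleIntegral.integral_smul_const,
          circleIntegral.integral_sub_center_inv c hR.ne',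
          ← circleIntegral_eq_of_differentiable_on_annulus_off_countable hr hrR countable_empty
            (fun z hz ↦ (hd z hz.2).continuousAt.continuousWithinAt)
            (fun z hz ↦ hd z fun h ↦ hz.1.2 (ball_subset_closedBall h))]
    _ = ‖∮ z in C(c, R), (z - c)⁻¹ • ((z - c) • f z - y)‖ := by
        congr 1
        refine circleIntegral.integral_congr hR.le fun z hz ↦ ?_
        simp only [smul_sub, inv_smul_smul₀ (hne z hz)]
    _ ≤ 2 * π * R * (R⁻¹ * (ε / (2 * π))) := by
        refine circleIntegral.norm_integral_le_of_norm_le_const hR.le fun z hz ↦ ?_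
        have hz' : ‖z - c‖ = R := mem_sphere_iff_norm.1 hz
        rw [norm_smul, norm_inv, hz']
        refine mul_le_mul_of_nonneg_left (hR₁ fun h ↦ ?_).le (inv_nonneg.2 hR.le)
        rw [mem_closedBall, dist_eq_norm, hz'] at h
        linarith [le_max_right r (R₁ + 1)]
    _ = ε := by field_simp

end CauchyAtInfinity

section Resolvent

variable {R A : Type*} [CommRing R] [Ring A] [Algebra R A]

theorem sylvester_resolvent_identity {a b : A} {z : R} (ha : z ∈ resolventSet R a)
    (hb : z ∈ resolventSet R (-b)) (c : A) :
    a * (resolvent a z * c * resolvent (-b) z) + resolvent a z * c * resolvent (-b) z * b =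
      resolvent a z * c - c * resolvent (-b) z := by
  have hRa : (a - algebraMap R A z) * resolvent a z = -1 := by
    rw [← neg_sub, neg_mul, resolvent,
      Ring.mul_inverse_cancel _ (spectrum.mem_resolventSet_iff.1 ha)]
  have hRb : resolvent (-b) z * (algebraMap R A z + b) = 1 := by
    rw [← sub_neg_eq_add]; exact Ring.inverse_mul_cancel _ (spectrum.mem_resolventSet_iff.1 hb)
  calc a * (resolvent a z * c * resolvent (-b) z) + resolvent a z * c * resolvent (-b) z * b
      = (a - algebraMap R A z) * resolvent a z * c * resolvent (-b) z +
          resolvent a z * c * (resolvent (-b) z * (algebraMap R A z + b)) := by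
        have hcomm : algebraMap R A z * (resolvent a z * (c * resolvent (-b) z)) =
            resolvent a z * (c * (resolvent (-b) z * algebraMap R A z)) := by
          rw [Algebra.commutes]; simp only [mul_assoc]
        simp only [sub_mul, mul_add, mul_assoc, hcomm]
        abel
    _ = resolvent a z * c - c * resolvent (-b) z := by rw [hRa, hRb]; noncomm_ring

end Resolvent

section BanachAlgebra

variable {𝒜 : Type*} [NormedRing 𝒜] [NormedAlgebra ℂ 𝒜] [CompleteSpace 𝒜]

theorem continuousOn_resolvent {a : 𝒜} {s : Set ℂ} (hs : s ⊆ resolventSet ℂ a) :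
    ContinuousOn (resolvent a) s :=
  continuousOn_of_forall_continuousAt fun _ hz ↦
    (spectrum.hasDerivAt_resolvent_const_left (hs hz)).continuousAt

theorem tendsto_sub_smul_resolvent_cobounded (a : 𝒜) (c : ℂ) :
    Tendsto (fun z ↦ (z - c) • resolvent a z) (cobounded ℂ) (𝓝 1) := by
  have hlim : Tendsto (fun z ↦ 1 + a * resolvent a z - c • resolvent a z) (cobounded ℂ)
      (𝓝 (1 + a * 0 - c • (0 : 𝒜))) :=
    ((spectrum.resolvent_tendsto_cobounded a).const_mul a |>.const_add 1).sub
      ((spectrum.resolvent_tendsto_cobounded a).const_smul c)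
  rw [mul_zero, smul_zero, add_zero, sub_zero] at hlim
  refine hlim.congr' ((spectrum.eventually_isUnit_resolvent a).mono fun z hz ↦ ?_)
  have hz' : (algebraMap ℂ 𝒜 z - a) * resolvent a z = 1 :=
    Ring.mul_inverse_cancel _ (spectrum.mem_resolventSet_iff.1 (spectrum.isUnit_resolvent.2 hz))
  show _ = (z - c) • resolvent a z
  rw [← hz', sub_smul, Algebra.smul_def z, sub_mul]
  abel

theorem circleIntegral_resolvent_of_spectrum_subset_ball {a : 𝒜} {c : ℂ} {r : ℝ} (hr : 0 < r)
    (ha : spectrum ℂ a ⊆ ball c r) :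
    (∮ z in C(c, r), resolvent a z) = (2 * π * I : ℂ) • (1 : 𝒜) :=
  circleIntegral_eq_of_differentiable_off_ball_of_tendsto hr
    (fun _ hz ↦ (spectrum.hasDerivAt_resolvent_const_left
      (spectrum.notMem_iff.1 fun h ↦ hz (ha h))).differentiableAt)
    (tendsto_sub_smul_resolvent_cobounded a c)

theorem circleIntegral_resolvent_eq_zero {a : 𝒜} {c : ℂ} {r : ℝ} (hr : 0 ≤ r)
    (ha : closedBall c r ⊆ resolventSet ℂ a) : (∮ z in C(c, r), resolvent a z) = 0 :=
  circleIntegral_eq_zero_of_differentiable_on_off_countable hr countable_empty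
    (continuousOn_resolvent ha) fun _ hz ↦
      (spectrum.hasDerivAt_resolvent_const_left (ha (ball_subset_closedBall hz.1))).differentiableAt

theorem circleIntegral.integral_const_mul_of_circleIntegrable (a : 𝒜) {f : ℂ → 𝒜} {c : ℂ}
    {r : ℝ} (hf : CircleIntegrable f c r) : (∮ z in C(c, r), a * f z) = a * ∮ z in C(c, r), f z :=
  (ContinuousLinearMap.mul ℂ 𝒜 a).circleIntegral_comp_comm hf

theorem circleIntegral.integral_mul_const_of_circleIntegrable (a : 𝒜) {f : ℂ → 𝒜} {c : ℂ}
    {r : ℝ} (hf : CircleIntegrable f c r) : (∮ z in C(c, r), f z * a) = (∮ z in C(c, r), f z) * a :=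
  ((ContinuousLinearMap.mul ℂ 𝒜).flip a).circleIntegral_comp_comm hf

theorem mul_circleIntegral_add_circleIntegral_mul {a b : 𝒜} {c : ℂ} {r : ℝ} (hr : 0 ≤ r)
    (ha : sphere c r ⊆ resolventSet ℂ a) (hb : sphere c r ⊆ resolventSet ℂ (-b)) (x : 𝒜) :
    a * (∮ z in C(c, r), resolvent a z * x * resolvent (-b) z) +
        (∮ z in C(c, r), resolvent a z * x * resolvent (-b) z) * b =
      (∮ z in C(c, r), resolvent a z) * x - x * ∮ z in C(c, r), resolvent (-b) z := by
  have hRa := continuousOn_resolvent ha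
  have hRb := continuousOn_resolvent hb
  have hf : ContinuousOn (fun z ↦ resolvent a z * x * resolvent (-b) z) (sphere c r) :=
    (hRa.mul continuousOn_const).mul hRb
  have haf : CircleIntegrable (fun z ↦ a * (resolvent a z * x * resolvent (-b) z)) c r :=
    (continuousOn_const.mul hf).circleIntegrable hr
  have hfb : CircleIntegrable (fun z ↦ resolvent a z * x * resolvent (-b) z * b) c r :=
    (hf.mul continuousOn_const).circleIntegrable hr
  have hRax : CircleIntegrable (fun z ↦ resolvent a z * x) c r :=
    (hRa.mul continuousOn_const).circleIntegrable hr
  have hxRb : CircleIntegrable (fun z ↦ x * resolvent (-b) z) c r :=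
    (continuousOn_const.mul hRb).circleIntegrable hr
  rw [← circleIntegral.integral_const_mul_of_circleIntegrable a (hf.circleIntegrable hr),
    ← circleIntegral.integral_mul_const_of_circleIntegrable b (hf.circleIntegrable hr),
    ← circleIntegral.integral_add haf hfb,
    circleIntegral.integral_congr hr fun z hz ↦ sylvester_resolvent_identity (ha hz) (hb hz) x,
    circleIntegral.integral_sub hRax hxRb,
    circleIntegral.integral_mul_const_of_circleIntegrable x (hRa.circleIntegrable hr),
    circleIntegral.integral_const_mul_of_circleIntegrable x (hRb.circleIntegrable hr)]

end BanachAlgebra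

/-- Rosenblum's integral formula on a circular contour: if `σ(A)` lies inside
the open disc `B(z₀, ρ)` and `σ(-B)` is disjoint from the closed disc, then
`X := -(2πi)⁻¹ ∮_{|z-z₀|=ρ} (z·1-A)⁻¹ C (z·1+B)⁻¹ dz` solves
`A·X + X·B + C = 0`. -/
theorem stmt_4 {𝒜 : Type*} [NormedRing 𝒜] [NormedAlgebra ℂ 𝒜] [CompleteSpace 𝒜]
    (A B C : 𝒜) (z₀ : ℂ) (ρ : ℝ) (hρ : 0 < ρ)
    (hA : spectrum ℂ A ⊆ Metric.ball z₀ ρ)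
    (hB : spectrum ℂ (-B) ∩ Metric.closedBall z₀ ρ = ∅) :
    ∀ X : 𝒜,
      X = -((2 * (Real.pi : ℂ) * Complex.I)⁻¹ •
        ∮ z in C(z₀, ρ), Ring.inverse (algebraMap ℂ 𝒜 z - A) * C *
          Ring.inverse (algebraMap ℂ 𝒜 z + B)) →
      A * X + X * B + C = 0 := by
  rintro X rfl
  have hAres : sphere z₀ ρ ⊆ resolventSet ℂ A := fun z hz ↦
    spectrum.notMem_iff.1 fun h ↦ (mem_ball.1 (hA h)).ne (mem_sphere.1 hz)
  have hBres : closedBall z₀ ρ ⊆ resolventSet ℂ (-B) := fun z hz ↦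
    spectrum.notMem_iff.1 fun h ↦ eq_empty_iff_forall_notMem.1 hB z ⟨h, hz⟩
  have hsylvester := mul_circleIntegral_add_circleIntegral_mul hρ.le hAres
    (sphere_subset_closedBall.trans hBres) C
  rw [circleIntegral_resolvent_of_spectrum_subset_ball hρ hA,
    circleIntegral_resolvent_eq_zero hρ.le hBres, smul_mul_assoc, one_mul, mul_zero,
    sub_zero] at hsylvester
  simp only [resolvent, sub_neg_eq_add] at hsylvester
  rw [mul_neg, neg_mul, mul_smul_comm, smul_mul_assoc, ← neg_add, ← smul_add, hsylvester,
    inv_smul_smul₀ two_pi_I_ne_zero, neg_add_cancel]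
end

section
/- Let E be a complex Banach space and A, B, C bounded linear operators on E with C a compact operator. Let z₀ ∈ ℂ and ρ > 0 be such that σ(A) is contained in the open ball B(z₀, ρ) and σ(−B) is disjoint from the closed ball of center z₀ and radius ρ. Then the operator X := −(2πi)^{-1} ∮_{|z−z₀|=ρ} (z·I − A)^{-1} ∘ C ∘ (z·I + B)^{-1} dz is a compact operator on E. -/
/-!
Each integrand `(zI - A)⁻¹ C (zI + B)⁻¹` is compact because the compact operators form a
two-sided ideal, and a closed subspace contains the Bochner integral of any function taking
values in it; the compact operators are closed in operator norm.
-/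

open MeasureTheory Metric

lemma MeasureTheory.integral_mem_of_isClosed {α F : Type*} [MeasurableSpace α] {μ : Measure α}
    [NormedAddCommGroup F] [NormedSpace ℝ F] [CompleteSpace F] {p : Submodule ℝ F}
    (hp : IsClosed (p : Set F)) {f : α → F} (hf : ∀ x, f x ∈ p) : ∫ x, f x ∂μ ∈ p := by
  by_cases hfi : Integrable f μ
  · have : CompleteSpace p := hp.completeSpace_coe
    let g : α → p := fun x => ⟨f x, hf x⟩
    have hg : Integrable g μ :=
      ⟨Topology.IsEmbedding.subtypeVal.aestronglyMeasurable_comp_iff.mp hfi.1, hfi.2⟩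
    convert (∫ x, g x ∂μ).2 using 1
    exact p.subtypeL.integral_comp_comm hg
  · rw [integral_undef hfi]
    exact p.zero_mem

lemma intervalIntegral_mem_of_isClosed {F : Type*} [NormedAddCommGroup F] [NormedSpace ℝ F]
    [CompleteSpace F] {p : Submodule ℝ F} (hp : IsClosed (p : Set F)) {f : ℝ → F}
    (hf : ∀ t, f t ∈ p) (a b : ℝ) : (∫ t in a..b, f t) ∈ p :=
  p.sub_mem (integral_mem_of_isClosed hp hf) (integral_mem_of_isClosed hp hf)

lemma circleIntegral_mem_of_isClosed {F : Type*} [NormedAddCommGroup F] [NormedSpace ℂ F]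
    [CompleteSpace F] {p : Submodule ℂ F} (hp : IsClosed (p : Set F)) {f : ℂ → F} {c : ℂ}
    {R : ℝ} (hf : ∀ z ∈ sphere c |R|, f z ∈ p) : (∮ z in C(c, R), f z) ∈ p :=
  intervalIntegral_mem_of_isClosed (p := p.restrictScalars ℝ) hp
    (fun θ => p.smul_mem _ (hf _ (circleMap_mem_sphere' c R θ))) _ _

lemma IsCompactOperator.circleIntegral {E F : Type*} [NormedAddCommGroup E] [NormedSpace ℂ E]
    [NormedAddCommGroup F] [NormedSpace ℂ F] [CompleteSpace F] {f : ℂ → E →L[ℂ] F} {c : ℂ}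
    {R : ℝ} (hf : ∀ z ∈ sphere c |R|, IsCompactOperator (f z)) :
    IsCompactOperator ⇑(∮ z in C(c, R), f z) :=
  circleIntegral_mem_of_isClosed (p := compactOperator (RingHom.id ℂ) E F)
    isClosed_setOfPred_isCompactOperator hf

theorem stmt_5_general {E : Type*} [NormedAddCommGroup E] [NormedSpace ℂ E] [CompleteSpace E]
    (A B C : E →L[ℂ] E) (hC : IsCompactOperator (⇑C)) (z₀ : ℂ) (ρ : ℝ) :
    IsCompactOperator
      (⇑(-((2 * (Real.pi : ℂ) * Complex.I)⁻¹ •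
        ∮ z in C(z₀, ρ), Ring.inverse (algebraMap ℂ (E →L[ℂ] E) z - A) * C *
          Ring.inverse (algebraMap ℂ (E →L[ℂ] E) z + B)))) := by
  have hX := IsCompactOperator.circleIntegral (c := z₀) (R := ρ)
    (f := fun z => Ring.inverse (algebraMap ℂ (E →L[ℂ] E) z - A) * C *
      Ring.inverse (algebraMap ℂ (E →L[ℂ] E) z + B))
    fun z _ => (hC.clm_comp _).comp_clm _
  exact (hX.smul _).neg

/-- Compactness of the Rosenblum integral solution of a Sylvester equation
with compact right-hand side: if `C` is a compact operator, then
`X := -(2πi)⁻¹ ∮_{|z-z₀|=ρ} (zI-A)⁻¹ ∘ C ∘ (zI+B)⁻¹ dz` is compact. -/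
theorem stmt_5 {E : Type*} [NormedAddCommGroup E] [NormedSpace ℂ E] [CompleteSpace E]
    (A B C : E →L[ℂ] E) (hC : IsCompactOperator (⇑C)) (z₀ : ℂ) (ρ : ℝ) (hρ : 0 < ρ)
    (hA : spectrum ℂ A ⊆ Metric.ball z₀ ρ)
    (hB : spectrum ℂ (-B) ∩ Metric.closedBall z₀ ρ = ∅) :
    IsCompactOperator
      (⇑(-((2 * (Real.pi : ℂ) * Complex.I)⁻¹ •
        ∮ z in C(z₀, ρ), Ring.inverse (algebraMap ℂ (E →L[ℂ] E) z - A) * C *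
          Ring.inverse (algebraMap ℂ (E →L[ℂ] E) z + B)))) :=
  stmt_5_general A B C hC z₀ ρ
end

section
/- Let 𝒜 be a complex unital Banach algebra, z₀ ∈ ℂ, 0 ≤ ρ' < ρ, and A ∈ 𝒜 with ‖A − z₀·1‖ ≤ ρ'. Let α₁,…,α_k ∈ ℂ and β₁,…,β_k ∈ ℂ with |β_j − z₀| > ρ for every j. Then each A − β_j·1 is invertible and ‖∏_{j=1}^{k} (A − α_j·1)(A − β_j·1)^{-1}‖ ≤ (ρ/(ρ − ρ')) · sup_{|z−z₀| ≤ ρ} ∏_{j=1}^{k} |z − α_j| / |z − β_j|. -/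
/-!
Expand `r_k(z) = ∑ aₙ (z - z₀)ⁿ` on the closed disc of radius `ρ`. By the resolvent expansion of
`(A - βⱼ)⁻¹`, the coefficients of each factor, evaluated at `A - z₀`, sum to the corresponding
factor of `r_k(A)`; since evaluating absolutely convergent power series at `A - z₀` is
multiplicative (Cauchy product), `r_k(A) = ∑ aₙ (A - z₀)ⁿ`. Cauchy's estimate on the circle of
radius `ρ` gives `|aₙ| ρⁿ ≤ sup |r_k|`, hence
`‖r_k(A)‖ ≤ sup |r_k| · ∑ (ρ'/ρ)ⁿ = sup |r_k| · ρ/(ρ - ρ')`.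
-/

open PowerSeries Metric FormalMultilinearSeries Finset

theorem sub_algebraMap_sub_algebraMap_sub_cancel {R 𝒜 : Type*} [CommRing R] [Ring 𝒜]
    [Algebra R 𝒜] (A : 𝒜) (z₀ β : R) :
    A - algebraMap R 𝒜 z₀ - algebraMap R 𝒜 (β - z₀) = A - algebraMap R 𝒜 β := by
  rw [map_sub]; abel

theorem PowerSeries.hasSum_coeff_one_smul_pow {R 𝒜 : Type*} [CommSemiring R] [Semiring 𝒜]
    [Algebra R 𝒜] [TopologicalSpace 𝒜] (B : 𝒜) :
    HasSum (fun n => coeff n (1 : R⟦X⟧) • B ^ n) 1 := by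
  simpa using hasSum_single (f := fun n => coeff n (1 : R⟦X⟧) • B ^ n) 0 fun n hn => by
    simp [coeff_one, hn]

section BanachAlgebra

variable {𝕜 𝒜 : Type*} [NormedField 𝕜] [NormedRing 𝒜] [NormedAlgebra 𝕜 𝒜] [NormOneClass 𝒜]
  {ρ : ℝ} {B : 𝒜}

theorem isUnit_sub_algebraMap_of_norm_lt [CompleteSpace 𝒜] {c : 𝕜} (h : ‖B‖ < ‖c‖) :
    IsUnit (B - algebraMap 𝕜 𝒜 c) := by
  simpa only [neg_sub] using (spectrum.mem_resolventSet_of_norm_lt h).neg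

theorem norm_smul_pow_le (a : 𝕜) (hB : ‖B‖ ≤ ρ) (n : ℕ) : ‖a • B ^ n‖ ≤ ‖a‖ * ρ ^ n :=
  (norm_smul_le _ _).trans <| by
    gcongr
    exact (norm_pow_le B n).trans (pow_le_pow_left₀ (norm_nonneg B) hB n)

theorem norm_le_of_hasSum_smul_pow {a : ℕ → 𝕜} {x : 𝒜} {ρ' C : ℝ} (hB : ‖B‖ ≤ ρ')
    (hlt : ρ' < ρ) (ha : ∀ n, ‖a n‖ * ρ ^ n ≤ C) (hx : HasSum (fun n => a n • B ^ n) x) :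
    ‖x‖ ≤ ρ / (ρ - ρ') * C := by
  have hρ' : 0 ≤ ρ' := (norm_nonneg B).trans hB
  have hρ : 0 < ρ := hρ'.trans_lt hlt
  have hgeom := (hasSum_geometric_of_lt_one (by positivity) ((div_lt_one hρ).2 hlt)).mul_left C
  refine (hx.norm_le_of_bounded hgeom fun n => ?_).trans_eq ?_
  · calc ‖a n • B ^ n‖ ≤ ‖a n‖ * ρ' ^ n := norm_smul_pow_le _ hB n
      _ = ‖a n‖ * ρ ^ n * (ρ' / ρ) ^ n := by
        rw [div_pow, mul_assoc, mul_div_cancel₀ _ (pow_ne_zero n hρ.ne')]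
      _ ≤ C * (ρ' / ρ) ^ n := by gcongr; exact ha n
  · field_simp [sub_ne_zero.2 hlt.ne']

namespace PowerSeries

theorem summable_norm_coeff_smul_pow {f : 𝕜⟦X⟧} (hf : Summable fun n => ‖coeff n f‖ * ρ ^ n)
    (hB : ‖B‖ ≤ ρ) : Summable fun n => ‖coeff n f • B ^ n‖ :=
  hf.of_nonneg_of_le (fun _ => norm_nonneg _) fun n => norm_smul_pow_le _ hB n

theorem summable_norm_coeff_one_mul_pow : Summable fun n => ‖coeff n (1 : 𝕜⟦X⟧)‖ * ρ ^ n :=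
  (hasSum_single (f := fun n => ‖coeff n (1 : 𝕜⟦X⟧)‖ * ρ ^ n) 0 fun n hn => by
    simp [coeff_one, hn]).summable

theorem summable_norm_coeff_mul_mul_pow {f g : 𝕜⟦X⟧} (hρ : 0 ≤ ρ)
    (hf : Summable fun n => ‖coeff n f‖ * ρ ^ n) (hg : Summable fun n => ‖coeff n g‖ * ρ ^ n) :
    Summable fun n => ‖coeff n (f * g)‖ * ρ ^ n := by
  have hf' : Summable fun n => ‖‖coeff n f‖ * ρ ^ n‖ := by
    simpa only [Real.norm_eq_abs] using hf.abs
  have hg' : Summable fun n => ‖‖coeff n g‖ * ρ ^ n‖ := by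
    simpa only [Real.norm_eq_abs] using hg.abs
  refine (summable_norm_sum_mul_antidiagonal_of_summable_norm hf' hg').of_nonneg_of_le
    (fun _ => by positivity) fun n => ?_
  rw [coeff_mul]
  calc ‖∑ p ∈ antidiagonal n, coeff p.1 f * coeff p.2 g‖ * ρ ^ n
      ≤ (∑ p ∈ antidiagonal n, ‖coeff p.1 f‖ * ‖coeff p.2 g‖) * ρ ^ n := by
        gcongr
        exact (norm_sum_le _ _).trans_eq (by simp only [norm_mul])
    _ = ∑ p ∈ antidiagonal n, ‖coeff p.1 f‖ * ρ ^ p.1 * (‖coeff p.2 g‖ * ρ ^ p.2) := by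
        rw [Finset.sum_mul]
        refine Finset.sum_congr rfl fun p hp => ?_
        rw [← mem_antidiagonal.1 hp, pow_add]
        ring
    _ ≤ _ := Real.le_norm_self _

theorem hasSum_coeff_mul_smul_pow [CompleteSpace 𝒜] {f g : 𝕜⟦X⟧} {x y : 𝒜}
    (hf : Summable fun n => ‖coeff n f‖ * ρ ^ n) (hg : Summable fun n => ‖coeff n g‖ * ρ ^ n)
    (hB : ‖B‖ ≤ ρ) (hx : HasSum (fun n => coeff n f • B ^ n) x)
    (hy : HasSum (fun n => coeff n g • B ^ n) y) :
    HasSum (fun n => coeff n (f * g) • B ^ n) (x * y) := by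
  have hf' := summable_norm_coeff_smul_pow hf hB
  have hg' := summable_norm_coeff_smul_pow hg hB
  have hcauchy : (fun n => coeff n (f * g) • B ^ n) =
      fun n => ∑ p ∈ antidiagonal n, coeff p.1 f • B ^ p.1 * (coeff p.2 g • B ^ p.2) := by
    funext n
    rw [coeff_mul, Finset.sum_smul]
    refine Finset.sum_congr rfl fun p hp => ?_
    rw [smul_mul_smul_comm, ← pow_add, mem_antidiagonal.1 hp]
  rw [hcauchy, (summable_norm_sum_mul_antidiagonal_of_summable_norm hf' hg').of_norm.hasSum_iff,
    ← tsum_mul_tsum_eq_tsum_sum_antidiagonal_of_summable_norm hf' hg', hx.tsum_eq, hy.tsum_eq]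

theorem summable_norm_coeff_prod_ofFn_mul_pow {k : ℕ} {f : Fin k → 𝕜⟦X⟧} (hρ : 0 ≤ ρ)
    (hf : ∀ j, Summable fun n => ‖coeff n (f j)‖ * ρ ^ n) :
    Summable fun n => ‖coeff n (List.ofFn f).prod‖ * ρ ^ n := by
  induction k with
  | zero => exact summable_norm_coeff_one_mul_pow
  | succ k ih =>
    rw [List.ofFn_succ, List.prod_cons]
    exact summable_norm_coeff_mul_mul_pow hρ (hf 0) (ih fun j => hf j.succ)

theorem hasSum_coeff_prod_ofFn_smul_pow [CompleteSpace 𝒜] {k : ℕ} {f : Fin k → 𝕜⟦X⟧}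
    {x : Fin k → 𝒜} (hf : ∀ j, Summable fun n => ‖coeff n (f j)‖ * ρ ^ n) (hB : ‖B‖ ≤ ρ)
    (hx : ∀ j, HasSum (fun n => coeff n (f j) • B ^ n) (x j)) :
    HasSum (fun n => coeff n (List.ofFn f).prod • B ^ n) (List.ofFn x).prod := by
  induction k with
  | zero => exact hasSum_coeff_one_smul_pow B
  | succ k ih =>
    simp only [List.ofFn_succ, List.prod_cons]
    exact hasSum_coeff_mul_smul_pow (hf 0)
      (summable_norm_coeff_prod_ofFn_mul_pow ((norm_nonneg B).trans hB) fun j => hf j.succ) hB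
      (hx 0) (ih (fun j => hf j.succ) fun j => hx j.succ)

/-- The expansion of `(X - c)⁻¹` at `0`. -/
noncomputable def resolventSeries (c : 𝕜) : 𝕜⟦X⟧ :=
  mk fun n => -c⁻¹ ^ (n + 1)

/-- The expansion of `(z - α)/(z - β) = 1 + (β - α)/(z - β)` in powers of `z - z₀`. -/
noncomputable def factorSeries (z₀ α β : 𝕜) : 𝕜⟦X⟧ :=
  1 + (β - α) • resolventSeries (β - z₀)

noncomputable def rationalSeries {k : ℕ} (z₀ : 𝕜) (α β : Fin k → 𝕜) : 𝕜⟦X⟧ :=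
  (List.ofFn fun j => factorSeries z₀ (α j) (β j)).prod

theorem summable_norm_coeff_resolventSeries_mul_pow {c : 𝕜} (hρ : 0 ≤ ρ) (hc : ρ < ‖c‖) :
    Summable fun n => ‖coeff n (resolventSeries c)‖ * ρ ^ n := by
  have hc0 : 0 < ‖c‖ := hρ.trans_lt hc
  refine ((summable_geometric_of_lt_one (div_nonneg hρ hc0.le) ((div_lt_one hc0).2 hc)).mul_left
    ‖c‖⁻¹).congr fun n => ?_
  simp only [resolventSeries, coeff_mk, norm_neg, norm_pow, norm_inv]
  ring

theorem hasSum_coeff_resolventSeries_smul_pow [CompleteSpace 𝒜] {c : 𝕜} (hB : ‖B‖ < ‖c‖) :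
    HasSum (fun n => coeff n (resolventSeries c) • B ^ n)
      (Ring.inverse (B - algebraMap 𝕜 𝒜 c)) := by
  have hc : c ≠ 0 := norm_pos_iff.1 ((norm_nonneg B).trans_lt hB)
  have ht : ‖c⁻¹ • B‖ < 1 := by
    rw [norm_smul, norm_inv, inv_mul_lt_iff₀ (norm_pos_iff.2 hc), mul_one]
    exact hB
  have hfactor : B - algebraMap 𝕜 𝒜 c = (-c) • (1 - c⁻¹ • B) := by
    rw [smul_sub, smul_smul, neg_mul, mul_inv_cancel₀ hc, Algebra.algebraMap_eq_smul_one]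
    module
  have hinv : Ring.inverse (B - algebraMap 𝕜 𝒜 c) = (-c)⁻¹ • Ring.inverse (1 - c⁻¹ • B) := by
    rw [← mul_one (Ring.inverse _),
      Ring.inverse_mul_eq_iff_eq_mul _ _ _ (isUnit_sub_algebraMap_of_norm_lt hB), hfactor,
      smul_mul_smul_comm, mul_inv_cancel₀ (neg_ne_zero.2 hc),
      Ring.mul_inverse_cancel _ (isUnit_one_sub_of_norm_lt_one ht), one_smul]
  rw [hinv]
  convert (hasSum_geom_series_inverse _ ht).const_smul (-c)⁻¹ using 2 with n
  rw [resolventSeries, coeff_mk, smul_pow, smul_smul, inv_neg, neg_mul, ← pow_succ']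

theorem summable_norm_coeff_factorSeries_mul_pow {z₀ α β : 𝕜} (hρ : 0 ≤ ρ)
    (h : ρ < ‖β - z₀‖) : Summable fun n => ‖coeff n (factorSeries z₀ α β)‖ * ρ ^ n := by
  refine ((summable_norm_coeff_one_mul_pow (𝕜 := 𝕜) (ρ := ρ)).add
    ((summable_norm_coeff_resolventSeries_mul_pow hρ h).mul_left ‖β - α‖)).of_nonneg_of_le
    (fun _ => by positivity) fun n => ?_
  rw [factorSeries, map_add, coeff_smul, smul_eq_mul, ← mul_assoc, ← add_mul]
  gcongr
  exact (norm_add_le _ _).trans_eq (by rw [norm_mul])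

theorem hasSum_coeff_factorSeries_smul_pow [CompleteSpace 𝒜] {A : 𝒜} {z₀ α β : 𝕜}
    (h : ‖A - algebraMap 𝕜 𝒜 z₀‖ < ‖β - z₀‖) :
    HasSum (fun n => coeff n (factorSeries z₀ α β) • (A - algebraMap 𝕜 𝒜 z₀) ^ n)
      ((A - algebraMap 𝕜 𝒜 α) * Ring.inverse (A - algebraMap 𝕜 𝒜 β)) := by
  have hres := hasSum_coeff_resolventSeries_smul_pow h
  have hunit := isUnit_sub_algebraMap_of_norm_lt h
  rw [sub_algebraMap_sub_algebraMap_sub_cancel] at hres hunit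
  have hval : (A - algebraMap 𝕜 𝒜 α) * Ring.inverse (A - algebraMap 𝕜 𝒜 β) =
      1 + (β - α) • Ring.inverse (A - algebraMap 𝕜 𝒜 β) := by
    have hα : A - algebraMap 𝕜 𝒜 α = A - algebraMap 𝕜 𝒜 β + algebraMap 𝕜 𝒜 (β - α) := by
      rw [map_sub]; abel
    rw [hα, add_mul, Ring.mul_inverse_cancel _ hunit, Algebra.algebraMap_eq_smul_one,
      smul_one_mul]
  rw [hval]
  simp only [factorSeries, map_add, coeff_smul, add_smul, smul_assoc]
  exact (hasSum_coeff_one_smul_pow _).add (hres.const_smul (β - α))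

theorem summable_norm_coeff_rationalSeries_mul_pow {k : ℕ} {z₀ : 𝕜} {α β : Fin k → 𝕜}
    (hρ : 0 ≤ ρ) (hβ : ∀ j, ρ < ‖β j - z₀‖) :
    Summable fun n => ‖coeff n (rationalSeries z₀ α β)‖ * ρ ^ n :=
  summable_norm_coeff_prod_ofFn_mul_pow hρ fun j =>
    summable_norm_coeff_factorSeries_mul_pow hρ (hβ j)

theorem hasSum_coeff_rationalSeries_smul_pow [CompleteSpace 𝒜] {k : ℕ} {z₀ : 𝕜}
    {α β : Fin k → 𝕜} {A : 𝒜} (h : ∀ j, ‖A - algebraMap 𝕜 𝒜 z₀‖ < ‖β j - z₀‖) :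
    HasSum (fun n => coeff n (rationalSeries z₀ α β) • (A - algebraMap 𝕜 𝒜 z₀) ^ n)
      (List.ofFn fun j =>
        (A - algebraMap 𝕜 𝒜 (α j)) * Ring.inverse (A - algebraMap 𝕜 𝒜 (β j))).prod :=
  hasSum_coeff_prod_ofFn_smul_pow
    (fun j => summable_norm_coeff_factorSeries_mul_pow (norm_nonneg _) (h j)) le_rfl
    fun j => hasSum_coeff_factorSeries_smul_pow (h j)

theorem hasSum_coeff_rationalSeries_mul_pow [CompleteSpace 𝕜] {k : ℕ} {z₀ w : 𝕜}
    {α β : Fin k → 𝕜} (h : ∀ j, ‖w‖ < ‖β j - z₀‖) :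
    HasSum (fun n => coeff n (rationalSeries z₀ α β) * w ^ n)
      (∏ j, (z₀ + w - α j) / (z₀ + w - β j)) := by
  have := hasSum_coeff_rationalSeries_smul_pow (𝒜 := 𝕜) (z₀ := z₀) (A := z₀ + w) (α := α)
    (β := β) (by simpa using h)
  simpa [Ring.inverse_eq_inv', div_eq_mul_inv, List.prod_ofFn] using this

end PowerSeries

end BanachAlgebra

theorem FormalMultilinearSeries.hasFPowerSeriesOnBall_ofScalars_of_hasSum {𝕜 : Type*}
    [NontriviallyNormedField 𝕜] {f : 𝕜 → 𝕜} {a : ℕ → 𝕜} {c : 𝕜} {R : ℝ} (hR : 0 < R)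
    (ha : Summable fun n => ‖a n‖ * R ^ n)
    (hf : ∀ w : 𝕜, ‖w‖ < R → HasSum (fun n => a n * w ^ n) (f (c + w))) :
    HasFPowerSeriesOnBall f (ofScalars 𝕜 a) c (ENNReal.ofReal R) where
  r_le := (ofScalars 𝕜 a).le_radius_of_summable_norm (r := R.toNNReal) <| by
    simpa only [ofScalars_norm, Real.coe_toNNReal _ hR.le] using ha
  r_pos := ENNReal.ofReal_pos.2 hR
  hasSum {w} hw := by
    rw [mem_eball_zero_iff, ← ofReal_norm, ENNReal.ofReal_lt_ofReal_iff hR] at hw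
    simpa only [ofScalars_apply_eq, smul_eq_mul] using hf w hw

theorem norm_mul_pow_le_of_hasFPowerSeriesAt_ofScalars {f : ℂ → ℂ} {a : ℕ → ℂ} {c : ℂ}
    {R C : ℝ} (hR : 0 < R) (hf : HasFPowerSeriesAt f (ofScalars ℂ a) c)
    (hd : DiffContOnCl ℂ f (ball c R)) (hC : ∀ z ∈ sphere c R, ‖f z‖ ≤ C) (n : ℕ) :
    ‖a n‖ * R ^ n ≤ C := by
  obtain ⟨r, hr⟩ := hf
  have hderiv : (n.factorial : ℂ) * a n = iteratedDeriv n f c := by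
    simpa [ofScalars_apply_eq, iteratedFDeriv_apply_eq_iteratedDeriv_mul_prod, nsmul_eq_mul]
      using hr.factorial_smul 1 n
  have hcauchy := Complex.norm_iteratedDeriv_le_of_forall_mem_sphere_norm_le n hR hd hC
  rw [← hderiv, norm_mul, Complex.norm_natCast, le_div_iff₀ (by positivity), mul_assoc]
    at hcauchy
  exact le_of_mul_le_mul_left hcauchy (by positivity)

theorem IsCompact.le_ciSup_of_continuousOn {X : Type*} [TopologicalSpace X] {s : Set X}
    (hs : IsCompact s) {g : X → ℝ} (hg : ContinuousOn g s) {x : X} (hx : x ∈ s) :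
    g x ≤ ⨆ y : s, g y :=
  le_ciSup (f := fun y : s => g y)
    (by simpa only [Set.image_eq_range] using hs.bddAbove_image hg) ⟨x, hx⟩

theorem stmt_8_general {𝒜 : Type*} [NormedRing 𝒜] [NormedAlgebra ℂ 𝒜] [CompleteSpace 𝒜]
    [NormOneClass 𝒜] (A : 𝒜) (z₀ : ℂ) (ρ ρ' : ℝ) (hlt : ρ' < ρ)
    (hA : ‖A - algebraMap ℂ 𝒜 z₀‖ ≤ ρ') (k : ℕ) (α β : Fin k → ℂ)
    (hβ : ∀ j, ρ < ‖β j - z₀‖) :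
    (∀ j, IsUnit (A - algebraMap ℂ 𝒜 (β j))) ∧
    ‖(List.ofFn fun j : Fin k =>
        (A - algebraMap ℂ 𝒜 (α j)) * Ring.inverse (A - algebraMap ℂ 𝒜 (β j))).prod‖ ≤
      ρ / (ρ - ρ') * ⨆ z : Metric.closedBall z₀ ρ,
        ∏ j : Fin k, ‖(z : ℂ) - α j‖ / ‖(z : ℂ) - β j‖ := by
  have hρ : 0 < ρ := ((norm_nonneg _).trans hA).trans_lt hlt
  have hpole : ∀ j, ‖A - algebraMap ℂ 𝒜 z₀‖ < ‖β j - z₀‖ := fun j =>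
    hA.trans_lt (hlt.trans (hβ j))
  refine ⟨fun j => ?_, ?_⟩
  · simpa only [sub_algebraMap_sub_algebraMap_sub_cancel] using
      isUnit_sub_algebraMap_of_norm_lt (hpole j)
  set r : ℂ → ℂ := fun z => ∏ j, (z - α j) / (z - β j)
  have hr : DifferentiableOn ℂ r (closedBall z₀ ρ) := by
    refine DifferentiableOn.fun_finsetProd fun j _ z hz => ?_
    refine ((differentiableAt_id.sub_const _).div (differentiableAt_id.sub_const _) ?_)
      |>.differentiableWithinAt
    rw [sub_ne_zero]
    rintro rfl
    exact (hβ j).not_ge (by simpa [dist_eq_norm] using hz)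
  have hsup : ∀ z ∈ closedBall z₀ ρ,
      ‖r z‖ ≤ ⨆ z : closedBall z₀ ρ, ∏ j, ‖(z : ℂ) - α j‖ / ‖(z : ℂ) - β j‖ := fun z hz => by
    simpa only [r, norm_prod, norm_div] using
      (isCompact_closedBall z₀ ρ).le_ciSup_of_continuousOn hr.continuousOn.norm hz
  have hseries : HasFPowerSeriesOnBall r (ofScalars ℂ fun n => coeff n (rationalSeries z₀ α β))
      z₀ (ENNReal.ofReal ρ) :=
    hasFPowerSeriesOnBall_ofScalars_of_hasSum hρ
      (summable_norm_coeff_rationalSeries_mul_pow hρ.le hβ) fun w hw =>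
        hasSum_coeff_rationalSeries_mul_pow fun j => hw.trans (hβ j)
  have hcoeff := norm_mul_pow_le_of_hasFPowerSeriesAt_ofScalars hρ hseries.hasFPowerSeriesAt
    (DifferentiableOn.diffContOnCl (by rwa [closure_ball z₀ hρ.ne']))
    fun z hz => hsup z (sphere_subset_closedBall hz)
  exact norm_le_of_hasSum_smul_pow hA hlt hcoeff (hasSum_coeff_rationalSeries_smul_pow hpole)

/-- Norm bound for a rational function of a Banach algebra element: if
`‖A - z₀·1‖ ≤ ρ' < ρ` and all poles `β j` lie strictly outside the closed disc
of radius `ρ` around `z₀`, then each `A - β j·1` is invertible and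
`‖∏ⱼ (A - αⱼ·1)(A - βⱼ·1)⁻¹‖ ≤ (ρ/(ρ-ρ')) · sup_{|z-z₀|≤ρ} ∏ⱼ |z-αⱼ|/|z-βⱼ|`. -/
theorem stmt_8 {𝒜 : Type*} [NormedRing 𝒜] [NormedAlgebra ℂ 𝒜] [CompleteSpace 𝒜]
    [NormOneClass 𝒜] (A : 𝒜) (z₀ : ℂ) (ρ ρ' : ℝ) (h0 : 0 ≤ ρ') (hlt : ρ' < ρ)
    (hA : ‖A - algebraMap ℂ 𝒜 z₀‖ ≤ ρ') (k : ℕ) (α β : Fin k → ℂ)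
    (hβ : ∀ j, ρ < ‖β j - z₀‖) :
    (∀ j, IsUnit (A - algebraMap ℂ 𝒜 (β j))) ∧
    ‖(List.ofFn fun j : Fin k =>
        (A - algebraMap ℂ 𝒜 (α j)) * Ring.inverse (A - algebraMap ℂ 𝒜 (β j))).prod‖ ≤
      ρ / (ρ - ρ') * ⨆ z : Metric.closedBall z₀ ρ,
        ∏ j : Fin k, ‖(z : ℂ) - α j‖ / ‖(z : ℂ) - β j‖ :=
  stmt_8_general A z₀ ρ ρ' hlt hA k α β hβ
end

section
/- Let 𝒜 be a unital associative algebra over ℂ, let A, B, C, X, Y ∈ 𝒜 and α, β ∈ ℂ, and assume A − β·1 and B + α·1 are invertible. Suppose A·X + X·B + C = 0. Define Y' := −(A − β·1)^{-1}·Y·(B + β·1) − (A − β·1)^{-1}·C and Y'' := −(A − α·1)·Y'·(B + α·1)^{-1} − C·(B + α·1)^{-1}. Then Y'' − X = (A − α·1)(A − β·1)^{-1} · (Y − X) · (B + β·1)(B + α·1)^{-1}. -/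
/-- One step of the ADI iteration for the Sylvester equation
`A·X + X·B + C = 0` with shifts `α, β`: if `Y` is the current iterate,
`Y'` the half-step iterate and `Y''` the next iterate, then
`Y'' - X = (A - α·1)(A - β·1)⁻¹ (Y - X) (B + β·1)(B + α·1)⁻¹`. -/
theorem stmt_10 {𝒜 : Type*} [Ring 𝒜] [Algebra ℂ 𝒜]
    (A B C X Y : 𝒜) (α β : ℂ)
    (hA : IsUnit (A - algebraMap ℂ 𝒜 β)) (hB : IsUnit (B + algebraMap ℂ 𝒜 α))
    (hX : A * X + X * B + C = 0) :
    ∀ Y' Y'' : 𝒜,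
      Y' = -(Ring.inverse (A - algebraMap ℂ 𝒜 β) * Y * (B + algebraMap ℂ 𝒜 β)) -
        Ring.inverse (A - algebraMap ℂ 𝒜 β) * C →
      Y'' = -((A - algebraMap ℂ 𝒜 α) * Y' * Ring.inverse (B + algebraMap ℂ 𝒜 α)) -
        C * Ring.inverse (B + algebraMap ℂ 𝒜 α) →
      Y'' - X = (A - algebraMap ℂ 𝒜 α) * Ring.inverse (A - algebraMap ℂ 𝒜 β) * (Y - X) *
        ((B + algebraMap ℂ 𝒜 β) * Ring.inverse (B + algebraMap ℂ 𝒜 α)) := by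
  intro Y' Y'' hY' hY''
  subst hY'' hY'
  set a := algebraMap ℂ 𝒜 α with ha
  set b := algebraMap ℂ 𝒜 β with hb
  set p := Ring.inverse (A - b) with hp
  set q := Ring.inverse (B + a) with hq
  have hp1 : (A - b) * p = 1 := Ring.mul_inverse_cancel _ hA
  have hp2 : p * (A - b) = 1 := Ring.inverse_mul_cancel _ hA
  have hq1 : (B + a) * q = 1 := Ring.mul_inverse_cancel _ hB
  -- key algebraic identity from the Sylvester equation
  have K : (A - a) * (C + X * (B + b)) = (A - b) * (C + X * (B + a)) := by
    have hC : C = -(A * X + X * B) := eq_neg_of_add_eq_zero_right hX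
    subst hC
    rw [ha, hb]
    simp only [Algebra.algebraMap_eq_smul_one]
    noncomm_ring
    module
  have hcommA : (A - a) * (A - b) = (A - b) * (A - a) := by
    rw [ha, hb]
    simp only [Algebra.algebraMap_eq_smul_one]
    noncomm_ring
    module
  clear_value a b p q
  clear ha hb hp hq hX hA hB
  -- commutation of (A - a) with p
  have hcomm : (A - a) * p = p * (A - a) := by
    calc (A - a) * p = 1 * ((A - a) * p) := (one_mul _).symm
      _ = (p * (A - b)) * ((A - a) * p) := by rw [hp2]
      _ = p * (((A - b) * (A - a)) * p) := by noncomm_ring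
      _ = p * (((A - a) * (A - b)) * p) := by rw [hcommA]
      _ = (p * (A - a)) * ((A - b) * p) := by noncomm_ring
      _ = p * (A - a) := by rw [hp1, mul_one]
  have key : (A - a) * p * (C + X * (B + b)) = C + X * (B + a) := by
    calc (A - a) * p * (C + X * (B + b)) = p * ((A - a) * (C + X * (B + b))) := by
          rw [hcomm, mul_assoc]
      _ = p * ((A - b) * (C + X * (B + a))) := by rw [K]
      _ = C + X * (B + a) := by rw [← mul_assoc, hp2, one_mul]
  have main : (A - a) * p * (C + X * (B + b)) * q = C * q + X := by
    rw [key, add_mul, mul_assoc, hq1, mul_one]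
  have expand : -((A - a) * (-(p * Y * (B + b)) - p * C) * q) - C * q - X
      = (A - a) * p * (Y - X) * ((B + b) * q) +
        ((A - a) * p * (C + X * (B + b)) * q - (C * q + X)) := by
    noncomm_ring
  rw [expand, main, sub_self, add_zero]
end

section
/- Let 𝒜 be a complex unital Banach algebra and M, N, C ∈ 𝒜 with ‖M‖·‖N‖ < 1, and let X := ∑_{j=0}^{∞} (−1)^{j+1} M^j · C · N^j (a convergent series). Then for every k ∈ ℕ the partial sum Y_k := ∑_{j=0}^{k} (−1)^{j+1} M^j · C · N^j satisfies X − Y_k = (−1)^{k+1} M^{k+1} · X · N^{k+1}, and in particular ‖X − Y_k‖ ≤ (‖M‖·‖N‖)^{k+1} · ‖X‖. -/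
/-! `X = -S` for the series `S = ∑ (-M)ʲ C Nʲ`, whose tail after `n` terms is `(-M)ⁿ S Nⁿ`
because its `(n + j)`-th term factors as `(-M)ⁿ ((-M)ʲ C Nʲ) Nⁿ`. Submultiplicativity then
bounds `‖(-M)ⁿ X Nⁿ‖` by `(‖M‖ ‖N‖)ⁿ ‖X‖`. -/

section SteinSeries

variable {R : Type*}

theorem norm_pow_mul_mul_pow_le [NormedRing R] (a c b : R) (n : ℕ) :
    ‖a ^ n * c * b ^ n‖ ≤ (‖a‖ * ‖b‖) ^ n * ‖c‖ := by
  rcases n.eq_zero_or_pos with rfl | hn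
  · simp
  calc ‖a ^ n * c * b ^ n‖ ≤ ‖a ^ n‖ * ‖c‖ * ‖b ^ n‖ := norm_mul₃_le
    _ ≤ ‖a‖ ^ n * ‖c‖ * ‖b‖ ^ n := by
        gcongr
        exacts [norm_pow_le' a hn, norm_pow_le' b hn]
    _ = (‖a‖ * ‖b‖) ^ n * ‖c‖ := by ring

theorem summable_pow_mul_mul_pow [NormedRing R] [CompleteSpace R] {a b : R} (c : R)
    (h : ‖a‖ * ‖b‖ < 1) : Summable fun j ↦ a ^ j * c * b ^ j :=
  .of_norm_bounded ((summable_geometric_of_lt_one (by positivity) h).mul_right ‖c‖)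
    (norm_pow_mul_mul_pow_le a c b)

theorem tsum_sub_sum_range_pow_mul_mul_pow [Ring R] [TopologicalSpace R] [IsTopologicalRing R]
    [T2Space R] {a b c : R} (hs : Summable fun j ↦ a ^ j * c * b ^ j) (n : ℕ) :
    ∑' j, a ^ j * c * b ^ j - ∑ j ∈ Finset.range n, a ^ j * c * b ^ j =
      a ^ n * (∑' j, a ^ j * c * b ^ j) * b ^ n := by
  have htail : ∀ j, a ^ (j + n) * c * b ^ (j + n) = a ^ n * (a ^ j * c * b ^ j) * b ^ n := by
    intro j
    rw [add_comm j n, pow_add, pow_add b n j, (Commute.pow_pow_self b n j).eq]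
    noncomm_ring
  rw [sub_eq_of_eq_add' (hs.sum_add_tsum_nat_add n).symm, tsum_congr htail,
    (hs.mul_left _).tsum_mul_right, hs.tsum_mul_left]

end SteinSeries

theorem stmt_12_general {𝒜 : Type*} [NormedRing 𝒜] [CompleteSpace 𝒜]
    (M N C : 𝒜) (h : ‖M‖ * ‖N‖ < 1) (k : ℕ) :
    ∀ X : 𝒜, X = ∑' j : ℕ, (-1 : 𝒜) ^ (j + 1) * (M ^ j * C * N ^ j) →
      X - (∑ j ∈ Finset.range (k + 1), (-1 : 𝒜) ^ (j + 1) * (M ^ j * C * N ^ j)) =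
          (-1 : 𝒜) ^ (k + 1) * (M ^ (k + 1) * X * N ^ (k + 1)) ∧
        ‖X - ∑ j ∈ Finset.range (k + 1), (-1 : 𝒜) ^ (j + 1) * (M ^ j * C * N ^ j)‖ ≤
          (‖M‖ * ‖N‖) ^ (k + 1) * ‖X‖ := by
  intro X hX
  have hsign : ∀ j, (-1 : 𝒜) ^ (j + 1) * (M ^ j * C * N ^ j) = -((-M) ^ j * C * N ^ j) := by
    intro j
    rw [neg_pow M, pow_succ, mul_neg_one, neg_mul]
    simp only [mul_assoc]
  simp only [hsign, tsum_neg, Finset.sum_neg_distrib] at hX ⊢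
  have hs : Summable fun j ↦ (-M) ^ j * C * N ^ j :=
    summable_pow_mul_mul_pow C (by rwa [norm_neg])
  have hdiff : X - -∑ j ∈ Finset.range (k + 1), (-M) ^ j * C * N ^ j =
      (-M) ^ (k + 1) * X * N ^ (k + 1) := by
    rw [hX, sub_neg_eq_add, neg_add_eq_sub, ← neg_sub,
      tsum_sub_sum_range_pow_mul_mul_pow hs, mul_neg, neg_mul]
  refine ⟨by rw [hdiff, neg_pow, mul_assoc, mul_assoc, mul_assoc], ?_⟩
  simpa only [hdiff, norm_neg] using norm_pow_mul_mul_pow_le (-M) X N (k + 1)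

/-- Geometric convergence of the fixed-point iteration for the Stein equation:
for `X = ∑_{j≥0} (-1)^{j+1} Mʲ C Nʲ` (convergent since `‖M‖·‖N‖ < 1`) and the
partial sum `Y_k = ∑_{j=0}^{k} (-1)^{j+1} Mʲ C Nʲ`, one has
`X - Y_k = (-1)^{k+1} M^{k+1} X N^{k+1}` and
`‖X - Y_k‖ ≤ (‖M‖·‖N‖)^{k+1} ‖X‖`. -/
theorem stmt_12 {𝒜 : Type*} [NormedRing 𝒜] [NormedAlgebra ℂ 𝒜] [CompleteSpace 𝒜]
    (M N C : 𝒜) (h : ‖M‖ * ‖N‖ < 1) (k : ℕ) :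
    ∀ X : 𝒜, X = ∑' j : ℕ, (-1 : 𝒜) ^ (j + 1) * (M ^ j * C * N ^ j) →
      X - (∑ j ∈ Finset.range (k + 1), (-1 : 𝒜) ^ (j + 1) * (M ^ j * C * N ^ j)) =
          (-1 : 𝒜) ^ (k + 1) * (M ^ (k + 1) * X * N ^ (k + 1)) ∧
        ‖X - ∑ j ∈ Finset.range (k + 1), (-1 : 𝒜) ^ (j + 1) * (M ^ j * C * N ^ j)‖ ≤
          (‖M‖ * ‖N‖) ^ (k + 1) * ‖X‖ :=
  stmt_12_general M N C h k
end

section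
/- Let E be a complex Banach space and M, N bounded linear operators on E such that λ·μ ≠ −1 for every λ ∈ σ(M) and every μ ∈ σ(N). Then for every bounded linear operator C on E there exists a unique bounded linear operator X on E such that M∘X∘N + X + C = 0. -/
open WeakDual

section Key

variable {B : Type*} [NormedRing B] [NormedAlgebra ℂ B] [CompleteSpace B]

/-- If `a` and `b` commute in a complex Banach algebra and `λ·μ ≠ -1` for all
`λ ∈ σ(a)`, `μ ∈ σ(b)`, then `1 + a*b` is a unit. -/
lemma key_commute_unit (a b : B) (hab : a * b = b * a)
    (h : ∀ lam ∈ spectrum ℂ a, ∀ mu ∈ spectrum ℂ b, lam * mu ≠ -1) :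
    IsUnit (1 + a * b) := by
  rcases subsingleton_or_nontrivial B with hB | hB
  · exact isUnit_of_subsingleton _
  let C : Set B := Set.centralizer {a, b}
  let D : Subalgebra ℂ B := Subalgebra.centralizer ℂ C
  have habC : ({a, b} : Set B) ⊆ C := by
    rintro x (rfl | rfl)
    · rintro c (rfl | rfl) <;> simp [hab]
    · rintro c (rfl | rfl) <;> simp [hab]
  have hmemD : ∀ x : B, x ∈ D ↔ ∀ c ∈ C, c * x = x * c := fun x =>
    Subalgebra.mem_centralizer_iff ℂ
  have haD : a ∈ D := (hmemD a).mpr fun c hc => (hc a (by simp)).symm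
  have hbD : b ∈ D := (hmemD b).mpr fun c hc => (hc b (by simp)).symm
  have hDC : (D : Set B) ⊆ C := fun x hx => Set.centralizer_subset habC hx
  -- D is commutative
  have hcomm : ∀ x y : D, x * y = y * x := by
    intro x y
    exact Subtype.ext ((hmemD (x : B)).mp x.2 (y : B) (hDC y.2)).symm
  -- D is closed
  have hclosed : IsClosed (D : Set B) := by
    have : (D : Set B) = ⋂ c ∈ C, {x : B | c * x = x * c} := by
      ext x
      simp only [SetLike.mem_coe, hmemD, Set.mem_iInter, Set.mem_setOf_eq]
    rw [this]
    exact isClosed_biInter fun c _ =>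
      isClosed_eq (continuous_const.mul continuous_id) (continuous_id.mul continuous_const)
  -- inverse closedness of D
  have hinvD : ∀ x : D, IsUnit (x : B) → IsUnit x := by
    rintro x ⟨u, hu⟩
    have hxu : (x : B) = u := hu.symm
    have hvx : (↑u⁻¹ : B) * (x : B) = 1 := by rw [hxu]; exact u.inv_mul
    have hxv : (x : B) * (↑u⁻¹ : B) = 1 := by rw [hxu]; exact u.mul_inv
    have hvD : (↑u⁻¹ : B) ∈ D := by
      refine (hmemD _).mpr fun c hc => ?_
      have hcx : c * (x : B) = (x : B) * c := (hmemD (x : B)).mp x.2 c hc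
      calc c * (↑u⁻¹ : B) = ((↑u⁻¹ : B) * (x : B)) * (c * ↑u⁻¹) := by rw [hvx, one_mul]
        _ = (↑u⁻¹ : B) * ((x : B) * c) * ↑u⁻¹ := by noncomm_ring
        _ = (↑u⁻¹ : B) * (c * (x : B)) * ↑u⁻¹ := by rw [hcx]
        _ = ((↑u⁻¹ : B) * c) * ((x : B) * ↑u⁻¹) := by noncomm_ring
        _ = (↑u⁻¹ : B) * c := by rw [hxv, mul_one]
    refine isUnit_iff_exists.mpr ⟨⟨↑u⁻¹, hvD⟩, ?_, ?_⟩
    · exact Subtype.ext (by simpa using hxv)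
    · exact Subtype.ext (by simpa using hvx)
  -- spectrum in D is contained in spectrum in B
  have hspec : ∀ x : D, spectrum ℂ x ⊆ spectrum ℂ (x : B) := by
    intro x z hz
    rw [spectrum.mem_iff] at hz ⊢
    intro hcon
    apply hz
    have : ((algebraMap ℂ D z - x : D) : B) = algebraMap ℂ B z - (x : B) := by
      push_cast
      simp
    exact hinvD _ (this ▸ hcon)
  -- now assume not a unit and derive a contradiction via a character
  by_contra habs
  letI : NormedCommRing D := { (inferInstance : NormedRing D) with mul_comm := hcomm }
  letI : CompleteSpace D := hclosed.completeSpace_coe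
  let a' : D := ⟨a, haD⟩
  let b' : D := ⟨b, hbD⟩
  let e : D := 1 + a' * b'
  have heB : (e : B) = 1 + a * b := rfl
  have hne : ¬IsUnit e := by
    intro hu
    exact habs (by simpa [heB] using hu.map (D.val : D →ₐ[ℂ] B))
  obtain ⟨φ, hφ⟩ := WeakDual.CharacterSpace.exists_apply_eq_zero hne
  have hφe : (1 : ℂ) + φ a' * φ b' = 0 := by
    have h1 : φ e = φ 1 + φ a' * φ b' := by rw [map_add, map_mul]
    rw [hφ, map_one] at h1
    exact h1.symm
  have hmem_a : φ a' ∈ spectrum ℂ a := hspec a' (AlgHom.apply_mem_spectrum φ a')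
  have hmem_b : φ b' ∈ spectrum ℂ b := hspec b' (AlgHom.apply_mem_spectrum φ b')
  exact h _ hmem_a _ hmem_b (by linear_combination hφe)

end Key

/-- Solvability of the Stein equation: if `λ·μ ≠ -1` for every `λ ∈ σ(M)` and
`μ ∈ σ(N)`, then for every bounded operator `C` the equation
`M∘X∘N + X + C = 0` has a unique bounded solution `X`. -/
theorem stmt_18 {E : Type*} [NormedAddCommGroup E] [NormedSpace ℂ E] [CompleteSpace E]
    (M N : E →L[ℂ] E)
    (h : ∀ lam ∈ spectrum ℂ M, ∀ mu ∈ spectrum ℂ N, lam * mu ≠ -1) :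
    ∀ C : E →L[ℂ] E, ∃! X : E →L[ℂ] E, M.comp (X.comp N) + X + C = 0 := by
  classical
  -- left multiplication by M and right multiplication by N, as elements of B(A)
  set L : (E →L[ℂ] E) →L[ℂ] (E →L[ℂ] E) := ContinuousLinearMap.mul ℂ (E →L[ℂ] E) M with hL
  set R : (E →L[ℂ] E) →L[ℂ] (E →L[ℂ] E) := (ContinuousLinearMap.mul ℂ (E →L[ℂ] E)).flip N with hR
  have hLapp : ∀ X : E →L[ℂ] E, L X = M * X := fun X => rfl
  have hRapp : ∀ X : E →L[ℂ] E, R X = X * N := fun X => rfl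
  have hcomm : L * R = R * L := by
    refine ContinuousLinearMap.ext fun X => ?_
    simp only [ContinuousLinearMap.mul_apply, hLapp, hRapp, mul_assoc]
  -- spectral inclusions
  have hspecL : spectrum ℂ L ⊆ spectrum ℂ M := by
    intro z hz
    by_contra hzM
    rw [spectrum.notMem_iff] at hzM
    obtain ⟨u, hu⟩ := hzM
    rw [spectrum.mem_iff] at hz
    apply hz
    have hrw : algebraMap ℂ ((E →L[ℂ] E) →L[ℂ] (E →L[ℂ] E)) z - L = ContinuousLinearMap.mul ℂ (E →L[ℂ] E) (algebraMap ℂ (E →L[ℂ] E) z - M) := by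
      refine ContinuousLinearMap.ext fun X => ?_
      simp only [ContinuousLinearMap.sub_apply, ContinuousLinearMap.mul_apply', hLapp,
        Algebra.algebraMap_eq_smul_one, ContinuousLinearMap.smul_apply,
        ContinuousLinearMap.one_apply, sub_mul, smul_mul_assoc, one_mul]
    rw [hrw]
    refine isUnit_iff_exists.mpr ⟨ContinuousLinearMap.mul ℂ (E →L[ℂ] E) ↑u⁻¹, ?_, ?_⟩
    · refine ContinuousLinearMap.ext fun X => ?_
      have h1 : (algebraMap ℂ (E →L[ℂ] E) z - M) * ↑u⁻¹ = 1 := by rw [← hu]; exact u.mul_inv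
      simp only [ContinuousLinearMap.mul_apply, ContinuousLinearMap.mul_apply',
        ContinuousLinearMap.one_apply, ← mul_assoc, h1, one_mul]
    · refine ContinuousLinearMap.ext fun X => ?_
      have h1 : (↑u⁻¹ : E →L[ℂ] E) * (algebraMap ℂ (E →L[ℂ] E) z - M) = 1 := by rw [← hu]; exact u.inv_mul
      simp only [ContinuousLinearMap.mul_apply, ContinuousLinearMap.mul_apply',
        ContinuousLinearMap.one_apply, ← mul_assoc, h1, one_mul]
  have hspecR : spectrum ℂ R ⊆ spectrum ℂ N := by
    intro z hz
    by_contra hzN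
    rw [spectrum.notMem_iff] at hzN
    obtain ⟨u, hu⟩ := hzN
    rw [spectrum.mem_iff] at hz
    apply hz
    have hrw : algebraMap ℂ ((E →L[ℂ] E) →L[ℂ] (E →L[ℂ] E)) z - R
        = (ContinuousLinearMap.mul ℂ (E →L[ℂ] E)).flip (algebraMap ℂ (E →L[ℂ] E) z - N) := by
      refine ContinuousLinearMap.ext fun X => ?_
      simp only [ContinuousLinearMap.sub_apply, ContinuousLinearMap.flip_apply,
        ContinuousLinearMap.mul_apply', hRapp, Algebra.algebraMap_eq_smul_one,
        ContinuousLinearMap.smul_apply, ContinuousLinearMap.one_apply, mul_sub,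
        mul_smul_comm, mul_one]
    rw [hrw]
    refine isUnit_iff_exists.mpr ⟨(ContinuousLinearMap.mul ℂ (E →L[ℂ] E)).flip ↑u⁻¹, ?_, ?_⟩
    · refine ContinuousLinearMap.ext fun X => ?_
      have h1 : (↑u⁻¹ : E →L[ℂ] E) * (algebraMap ℂ (E →L[ℂ] E) z - N) = 1 := by rw [← hu]; exact u.inv_mul
      simp only [ContinuousLinearMap.mul_apply, ContinuousLinearMap.flip_apply,
        ContinuousLinearMap.mul_apply', ContinuousLinearMap.one_apply, mul_assoc, h1, mul_one]
    · refine ContinuousLinearMap.ext fun X => ?_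
      have h1 : (algebraMap ℂ (E →L[ℂ] E) z - N) * (↑u⁻¹ : E →L[ℂ] E) = 1 := by rw [← hu]; exact u.mul_inv
      simp only [ContinuousLinearMap.mul_apply, ContinuousLinearMap.flip_apply,
        ContinuousLinearMap.mul_apply', ContinuousLinearMap.one_apply, mul_assoc, h1, mul_one]
  -- the Stein operator is invertible
  have hkey : IsUnit (1 + L * R) :=
    key_commute_unit L R hcomm fun lam hlam mu hmu =>
      h lam (hspecL hlam) mu (hspecR hmu)
  obtain ⟨u, hu⟩ := hkey
  have hSapp : ∀ X : E →L[ℂ] E, (1 + L * R) X = X + M.comp (X.comp N) := by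
    intro X
    simp only [ContinuousLinearMap.add_apply, ContinuousLinearMap.one_apply,
      ContinuousLinearMap.mul_apply, hLapp, hRapp]
    rfl
  intro C
  refine ⟨(↑u⁻¹ : (E →L[ℂ] E) →L[ℂ] (E →L[ℂ] E)) (-C), ?_, ?_⟩
  · have h2 : (1 + L * R) ((↑u⁻¹ : (E →L[ℂ] E) →L[ℂ] (E →L[ℂ] E)) (-C)) = -C := by
      rw [← hu, ← ContinuousLinearMap.mul_apply, u.mul_inv]
      rfl
    rw [hSapp] at h2
    have h3 := congrArg (· + C) h2
    simpa [add_assoc, add_comm, add_left_comm] using h3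
  · intro X hX
    have hSX : (1 + L * R) X = -C := by
      rw [hSapp]
      calc X + M.comp (X.comp N) = M.comp (X.comp N) + X + C - C := by abel
        _ = -C := by rw [hX]; abel
    have h4 : (↑u⁻¹ : (E →L[ℂ] E) →L[ℂ] (E →L[ℂ] E)) ((1 + L * R) X) = (↑u⁻¹ : (E →L[ℂ] E) →L[ℂ] (E →L[ℂ] E)) (-C) := by rw [hSX]
    rwa [← hu, ← ContinuousLinearMap.mul_apply, u.inv_mul, ContinuousLinearMap.one_apply] at h4
end

section
/- Let E be a complex Banach space and A, B bounded linear operators on E. The Sylvester operator 𝒯 : X ↦ A∘X + X∘B is a bounded linear operator on the Banach space of bounded linear operators on E, and its spectrum satisfies σ(𝒯) ⊆ σ(A) + σ(B) = {λ + μ : λ ∈ σ(A), μ ∈ σ(B)}. -/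
open Pointwise

/-- In a complex Banach algebra, the spectrum of a sum of commuting elements is
contained in the pointwise sum of the spectra. -/
theorem commute_spectrum_add_subset {G : Type*} [NormedRing G] [NormedAlgebra ℂ G]
    [CompleteSpace G] (a b : G) (hab : Commute a b) :
    spectrum ℂ (a + b) ⊆ spectrum ℂ a + spectrum ℂ b := by
  classical
  let C : Set G := Set.centralizer {a, b}
  let S : Subalgebra ℂ G := Subalgebra.centralizer ℂ C
  have haC : a ∈ C := by
    intro m hm
    rcases hm with rfl | hm
    · rfl
    · simp only [Set.mem_singleton_iff] at hm
      subst hm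
      exact hab.symm.eq
  have hbC : b ∈ C := by
    intro m hm
    rcases hm with rfl | hm
    · exact hab.eq
    · simp only [Set.mem_singleton_iff] at hm
      subst hm
      rfl
  have haS : a ∈ S := (Subalgebra.mem_centralizer_iff ℂ).mpr fun g hg => (hg a (by simp)).symm
  have hbS : b ∈ S := (Subalgebra.mem_centralizer_iff ℂ).mpr fun g hg => (hg b (by simp)).symm
  -- `S` is closed, hence complete
  have hclosed : IsClosed (S : Set G) := by
    have : (S : Set G) = ⋂ z ∈ C, {x : G | z * x = x * z} := by
      ext x
      simp only [Set.mem_iInter, SetLike.mem_coe, Set.mem_setOf_eq]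
      exact Subalgebra.mem_centralizer_iff ℂ
    rw [this]
    exact isClosed_biInter fun z _ =>
      isClosed_eq (continuous_const.mul continuous_id) (continuous_id.mul continuous_const)
  haveI : CompleteSpace S := hclosed.completeSpace_coe
  -- `S` is commutative
  have hmem_C_of_mem_S : ∀ x : G, x ∈ S → x ∈ C := by
    intro x hx
    have hx' := (Subalgebra.mem_centralizer_iff ℂ).mp hx
    intro m hm
    rcases hm with rfl | hm
    · exact hx' m haC
    · simp only [Set.mem_singleton_iff] at hm
      subst hm
      exact hx' m hbC
  have hcomm : ∀ x y : S, x * y = y * x := by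
    rintro ⟨x, hx⟩ ⟨y, hy⟩
    have hyC : y ∈ C := hmem_C_of_mem_S y hy
    exact Subtype.ext (((Subalgebra.mem_centralizer_iff ℂ).mp hx y hyC).symm)
  letI : NormedCommRing S := { (inferInstance : NormedRing S) with mul_comm := hcomm }
  -- spectral permanence: the spectrum relative to `S` is contained in the full spectrum
  have hspec : ∀ x : S, spectrum ℂ x ⊆ spectrum ℂ (x : G) := by
    intro x z hz
    rw [spectrum.mem_iff] at hz ⊢
    intro hunit
    apply hz
    obtain ⟨u, hu⟩ := hunit
    have hinvS : (↑u⁻¹ : G) ∈ S := by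
      apply (Subalgebra.mem_centralizer_iff ℂ).mpr
      intro g hg
      have hgx : g * (x : G) = (x : G) * g := (Subalgebra.mem_centralizer_iff ℂ).mp x.2 g hg
      have hgu : g * (u : G) = (u : G) * g := by
        rw [hu, mul_sub, sub_mul, hgx, ← Algebra.commutes z g]
      calc g * (↑u⁻¹ : G) = ↑u⁻¹ * ((u : G) * g) * ↑u⁻¹ := by
            rw [← mul_assoc, Units.inv_mul, one_mul]
        _ = ↑u⁻¹ * (g * (u : G)) * ↑u⁻¹ := by rw [hgu]
        _ = ↑u⁻¹ * g := by rw [mul_assoc, mul_assoc, Units.mul_inv, mul_one]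
    refine isUnit_iff_exists.mpr ⟨⟨(↑u⁻¹ : G), hinvS⟩, ?_, ?_⟩
    · apply Subtype.ext
      push_cast
      rw [← hu]
      exact u.mul_inv
    · apply Subtype.ext
      push_cast
      rw [← hu]
      exact u.inv_mul
  -- now use characters of the commutative Banach algebra `S`
  intro z hz
  have h1 : z ∈ spectrum ℂ ((⟨a, haS⟩ + ⟨b, hbS⟩ : S)) := by
    apply spectrum.subset_subalgebra (⟨a, haS⟩ + ⟨b, hbS⟩ : S)
    simpa using hz
  obtain ⟨φ, hφ⟩ := WeakDual.CharacterSpace.mem_spectrum_iff_exists.mp h1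
  rw [map_add] at hφ
  have hxa : φ (⟨a, haS⟩ : S) ∈ spectrum ℂ a := hspec _ (AlgHom.apply_mem_spectrum φ _)
  have hxb : φ (⟨b, hbS⟩ : S) ∈ spectrum ℂ b := hspec _ (AlgHom.apply_mem_spectrum φ _)
  rw [← hφ]
  exact Set.add_mem_add hxa hxb

section MulAlgHom

variable (𝓐 : Type*) [NormedRing 𝓐] [NormedAlgebra ℂ 𝓐]

/-- Left multiplication as an algebra homomorphism into continuous linear maps. -/
noncomputable def lmulAlgHom : 𝓐 →ₐ[ℂ] (𝓐 →L[ℂ] 𝓐) where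
  toFun a := ContinuousLinearMap.mul ℂ 𝓐 a
  map_one' := by ext x; simp [ContinuousLinearMap.mul_apply']
  map_mul' a b := by ext x; simp [ContinuousLinearMap.mul_apply', mul_assoc]
  map_zero' := by ext x; simp [ContinuousLinearMap.mul_apply']
  map_add' a b := by ext x; simp [ContinuousLinearMap.mul_apply', add_mul]
  commutes' r := by
    ext x
    simp [ContinuousLinearMap.mul_apply', Algebra.algebraMap_eq_smul_one, smul_mul_assoc]

/-- Right multiplication as an algebra homomorphism from the opposite algebra into
continuous linear maps. -/
noncomputable def rmulAlgHom : 𝓐ᵐᵒᵖ →ₐ[ℂ] (𝓐 →L[ℂ] 𝓐) where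
  toFun a := (ContinuousLinearMap.mul ℂ 𝓐).flip a.unop
  map_one' := by ext x; simp [ContinuousLinearMap.mul_apply']
  map_mul' a b := by ext x; simp [ContinuousLinearMap.mul_apply', mul_assoc]
  map_zero' := by ext x; simp [ContinuousLinearMap.mul_apply']
  map_add' a b := by ext x; simp [ContinuousLinearMap.mul_apply', mul_add]
  commutes' r := by
    ext x
    simp [ContinuousLinearMap.mul_apply', Algebra.algebraMap_eq_smul_one, mul_smul_comm]

variable {𝓐}

@[simp] lemma lmulAlgHom_apply (a x : 𝓐) : lmulAlgHom 𝓐 a x = a * x := rfl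

@[simp] lemma rmulAlgHom_apply (a : 𝓐ᵐᵒᵖ) (x : 𝓐) : rmulAlgHom 𝓐 a x = x * a.unop := rfl

lemma lmul_rmul_commute (a : 𝓐) (b : 𝓐ᵐᵒᵖ) :
    Commute (lmulAlgHom 𝓐 a) (rmulAlgHom 𝓐 b) := by
  refine ContinuousLinearMap.ext fun X => ?_
  simp only [ContinuousLinearMap.mul_apply, lmulAlgHom_apply, rmulAlgHom_apply]
  rw [mul_assoc]

open MulOpposite in
lemma spectrum_rmulAlgHom_subset [CompleteSpace 𝓐] (b : 𝓐) :
    spectrum ℂ (rmulAlgHom 𝓐 (op b)) ⊆ spectrum ℂ b := by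
  refine (AlgHom.spectrum_apply_subset (rmulAlgHom 𝓐) (op b)).trans ?_
  intro z hz
  rw [spectrum.mem_iff] at hz ⊢
  intro hunit
  apply hz
  have h : algebraMap ℂ 𝓐ᵐᵒᵖ z - op b = op (algebraMap ℂ 𝓐 z - b) := by
    simp [MulOpposite.algebraMap_apply]
  rw [h]
  exact isUnit_op.mpr hunit

open MulOpposite in
/-- The general Sylvester spectral inclusion in a complex Banach algebra. -/
theorem sylvester_spectrum_subset [CompleteSpace 𝓐] (a b : 𝓐) :
    spectrum ℂ (lmulAlgHom 𝓐 a + rmulAlgHom 𝓐 (op b)) ⊆ spectrum ℂ a + spectrum ℂ b :=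
  calc spectrum ℂ (lmulAlgHom 𝓐 a + rmulAlgHom 𝓐 (op b))
      ⊆ spectrum ℂ (lmulAlgHom 𝓐 a) + spectrum ℂ (rmulAlgHom 𝓐 (op b)) :=
        commute_spectrum_add_subset _ _ (lmul_rmul_commute a (op b))
    _ ⊆ spectrum ℂ a + spectrum ℂ b :=
        Set.add_subset_add (AlgHom.spectrum_apply_subset (lmulAlgHom 𝓐) a)
          (spectrum_rmulAlgHom_subset b)

end MulAlgHom

open MulOpposite in
/-- Spectral inclusion for the Sylvester operator: the map
`𝒯 : X ↦ A∘X + X∘B` is a bounded linear operator on the Banach space of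
bounded operators on `E`, and `σ(𝒯) ⊆ σ(A) + σ(B)` (pointwise sum of sets). -/
theorem stmt_19 {E : Type*} [NormedAddCommGroup E] [NormedSpace ℂ E] [CompleteSpace E]
    (A B : E →L[ℂ] E) :
    ∃ T : (E →L[ℂ] E) →L[ℂ] (E →L[ℂ] E),
      (∀ X : E →L[ℂ] E, T X = A.comp X + X.comp B) ∧
      spectrum ℂ T ⊆ spectrum ℂ A + spectrum ℂ B := by
  refine ⟨lmulAlgHom _ A + rmulAlgHom _ (op B), fun X => ?_, sylvester_spectrum_subset A B⟩
  simp only [ContinuousLinearMap.add_apply, lmulAlgHom_apply, rmulAlgHom_apply,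
    MulOpposite.unop_op]
  rfl
end
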